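/- Let X be an n₁×n₂ real matrix with rank r < n₁/2 and let Y be an arbitrary n₁×n₂ real matrix. Let P_X^c and P_X^r denote the orthogonal projection matrices onto the column space and row space of X, respectively. If the matrix P_X^c Y P_X^r has rank r (i.e., full rank on these r-dimensional spaces), then Y can be decomposed as Y = Y₁ + Y₂ where rank(Y₁) = r and ‖X + Y₂‖_* = ‖X‖_* + ‖Y₂‖_*. -/

import Mathlib

open Matrix

/-- The nuclear norm of a real matrix: the sum of its singular values,
i.e. the sum of the square roots of the eigenvalues of `Xᵀ * X`. -/
noncomputable def nuclearNorm {m n : Type*} [Fintype m] [Fintype n] [DecidableEq n]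
    (X : Matrix m n ℝ) : ℝ :=
  ∑ i, Real.sqrt (((by simpa using Matrix.isHermitian_conjTranspose_mul_self X : (Xᵀ * X).IsHermitian)).eigenvalues i)

/-! In block form with respect to `Pc` and `Pr`, write `Y = [A B; C D]` with `A = Pc Y Pr`
invertible between the two `r`-dimensional ranges. The Schur-complement splitting
`Y₁ = [A B; C CA⁻¹B]`, `Y₂ = [0 0; 0 D - CA⁻¹B]` gives `rank Y₁ = rank A = r`, and `Y₂` maps into
the orthogonal complement of the column space of `X` and kills its row space. Then
`(X + Y₂)ᵀ(X + Y₂) = XᵀX + Y₂ᵀY₂` with `XᵀX · Y₂ᵀY₂ = 0`, so the square root of the sum is the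
sum of the square roots, and taking traces the nuclear norms add. -/

open scoped MatrixOrder

theorem LinearMap.exists_comp_eq_of_ker_le {K V W U : Type*} [Field K] [AddCommGroup V]
    [Module K V] [AddCommGroup W] [Module K W] [AddCommGroup U] [Module K U]
    {f : V →ₗ[K] W} {g : V →ₗ[K] U} (h : ker f ≤ ker g) : ∃ l : W →ₗ[K] U, l ∘ₗ f = g := by
  obtain ⟨s, hs⟩ := (ker f).liftQ f le_rfl |>.exists_leftInverse_of_injective
    (Submodule.ker_liftQ_eq_bot' _ _ rfl)
  refine ⟨(ker f).liftQ g h ∘ₗ s, LinearMap.ext fun v => ?_⟩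
  have hsf : s (f v) = (ker f).mkQ v := congr($hs ((ker f).mkQ v))
  simp [hsf]

namespace Matrix

section Decomposition

variable {K : Type*} [Field K] {m n p : Type*} [Fintype m] [Fintype n] [Fintype p]

theorem exists_mul_eq_of_rank_mul_eq {A : Matrix m n K} {B : Matrix n p K}
    (h : (A * B).rank = B.rank) : ∃ G : Matrix n m K, G * (A * B) = B := by
  classical
  have hle : LinearMap.ker B.mulVecLin ≤ LinearMap.ker (A * B).mulVecLin := by
    rw [mulVecLin_mul]; exact LinearMap.ker_le_ker_comp _ _
  have hker : LinearMap.ker (A * B).mulVecLin = LinearMap.ker B.mulVecLin := by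
    refine (Submodule.eq_of_le_of_finrank_eq hle ?_).symm
    have h₁ := LinearMap.finrank_range_add_finrank_ker (A * B).mulVecLin
    have h₂ := LinearMap.finrank_range_add_finrank_ker B.mulVecLin
    unfold rank at h
    omega
  obtain ⟨l, hl⟩ := LinearMap.exists_comp_eq_of_ker_le hker.le
  refine ⟨LinearMap.toMatrix' l, toLin'.injective ?_⟩
  rw [toLin'_mul, toLin'_toMatrix']
  exact hl

theorem mul_eq_self_of_range_le {R : Type*} [CommRing R] {P : Matrix m m R} {M : Matrix m n R}
    (hP : P * P = P) (h : LinearMap.range M.mulVecLin ≤ LinearMap.range P.mulVecLin) :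
    P * M = M := by
  refine ext_iff_mulVec.mpr fun v => ?_
  obtain ⟨w, hw⟩ := h (LinearMap.mem_range_self M.mulVecLin v)
  simp only [mulVecLin_apply] at hw
  rw [← mulVec_mulVec, ← hw, mulVec_mulVec, hP]

theorem exists_add_rank_le_of_rank_mul_mul_eq {P : Matrix m m K} {Q : Matrix n n K}
    (hP : P * P = P) (hQ : Q * Q = Q) (Y : Matrix m n K) (h : (P * Y * Q).rank = Q.rank) :
    ∃ Y₁ Y₂ : Matrix m n K, Y = Y₁ + Y₂ ∧ Y₁.rank ≤ P.rank ∧ P * Y₂ = 0 ∧ Y₂ * Q = 0 := by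
  classical
  obtain ⟨G, hG⟩ := exists_mul_eq_of_rank_mul_eq h
  set T := Y * Q * G
  have hTQ : T * (P * Y) * Q = Y * Q := by
    simp only [T, Matrix.mul_assoc] at hG ⊢
    rw [hG, hQ]
  refine ⟨(P + (1 - P) * T) * (P * Y), (1 - P) * (Y - T * (P * Y)), ?_, ?_, ?_, ?_⟩
  · simp only [Matrix.add_mul, Matrix.mul_sub, Matrix.sub_mul, Matrix.one_mul,
      ← Matrix.mul_assoc, hP]
    abel
  · exact (rank_mul_le_right _ _).trans (rank_mul_le_left _ _)
  · rw [← Matrix.mul_assoc, mul_sub, mul_one, hP, sub_self, Matrix.zero_mul]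
  · rw [Matrix.mul_assoc, Matrix.sub_mul Y, hTQ, sub_self, Matrix.mul_zero]

end Decomposition

section FunctionalCalculus

variable {n : Type*} [Fintype n] [DecidableEq n]

lemma IsHermitian.trace_cfc {A : Matrix n n ℝ} (hA : A.IsHermitian) (f : ℝ → ℝ) :
    (cfc f A).trace = ∑ i, f (hA.eigenvalues i) := by
  rw [hA.cfc_eq, IsHermitian.cfc, Unitary.conjStarAlgAut_apply, trace_mul_cycle,
    UnitaryGroup.star_mul_self, one_mul, trace_diagonal]
  rfl

/- `f x / x` takes the junk value `0` at `x = 0`, in agreement with `f 0 = 0`; continuity is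
automatic on the finite spectrum. -/
lemma IsHermitian.cfc_eq_cfc_div_mul_self {A : Matrix n n ℝ} (hA : A.IsHermitian) {f : ℝ → ℝ}
    (hf : f 0 = 0) : cfc f A = cfc (fun x => f x / x) A * A :=
  calc cfc f A = cfc (fun x => f x / x * x) A := cfc_congr fun x _ => by
        rcases eq_or_ne x 0 with rfl | hx
        · simp [hf]
        · exact (div_mul_cancel₀ _ hx).symm
    _ = cfc (fun x => f x / x) A * A := by
        rw [cfc_mul _ _ A (A.finite_real_spectrum.continuousOn _)
          (A.finite_real_spectrum.continuousOn _), cfc_id' ℝ A]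

lemma IsHermitian.cfc_eq_self_mul_cfc_div {A : Matrix n n ℝ} (hA : A.IsHermitian) {f : ℝ → ℝ}
    (hf : f 0 = 0) : cfc f A = A * cfc (fun x => f x / x) A :=
  calc cfc f A = cfc (fun x => x * (f x / x)) A := cfc_congr fun x _ => by
        rcases eq_or_ne x 0 with rfl | hx
        · simp [hf]
        · exact (mul_div_cancel₀ _ hx).symm
    _ = A * cfc (fun x => f x / x) A := by
        rw [cfc_mul _ _ A (A.finite_real_spectrum.continuousOn _)
          (A.finite_real_spectrum.continuousOn _), cfc_id' ℝ A]

lemma cfc_mul_cfc_eq_zero_of_mul_eq_zero {A B : Matrix n n ℝ} (hA : A.IsHermitian)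
    (hB : B.IsHermitian) (hAB : A * B = 0) {f g : ℝ → ℝ} (hf : f 0 = 0) (hg : g 0 = 0) :
    cfc f A * cfc g B = 0 := by
  rw [hA.cfc_eq_cfc_div_mul_self hf, hB.cfc_eq_self_mul_cfc_div hg, Matrix.mul_assoc,
    ← Matrix.mul_assoc A, hAB, Matrix.zero_mul, Matrix.mul_zero]

lemma PosSemidef.sqrt_mul_sqrt_eq_zero {A B : Matrix n n ℝ} (hA : A.PosSemidef)
    (hB : B.PosSemidef) (hAB : A * B = 0) : CFC.sqrt A * CFC.sqrt B = 0 := by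
  rw [CFC.sqrt_eq_real_sqrt A hA.nonneg, CFC.sqrt_eq_real_sqrt B hB.nonneg, cfcₙ_eq_cfc,
    cfcₙ_eq_cfc]
  exact cfc_mul_cfc_eq_zero_of_mul_eq_zero hA.1 hB.1 hAB Real.sqrt_zero Real.sqrt_zero

lemma PosSemidef.sqrt_add_of_mul_eq_zero {A B : Matrix n n ℝ} (hA : A.PosSemidef)
    (hB : B.PosSemidef) (hAB : A * B = 0) :
    CFC.sqrt (A + B) = CFC.sqrt A + CFC.sqrt B := by
  have hBA : B * A = 0 := by
    simpa only [conjTranspose_mul, hA.1.eq, hB.1.eq, conjTranspose_zero] using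
      congrArg (·ᴴ) hAB
  refine CFC.sqrt_unique ?_ (add_nonneg (CFC.sqrt_nonneg A) (CFC.sqrt_nonneg B))
  rw [add_mul, mul_add, mul_add, hA.sqrt_mul_sqrt_eq_zero hB hAB, hB.sqrt_mul_sqrt_eq_zero hA hBA,
    CFC.sqrt_mul_sqrt_self A hA.nonneg, CFC.sqrt_mul_sqrt_self B hB.nonneg, add_zero, zero_add]

end FunctionalCalculus

lemma posSemidef_transpose_mul_self {m n : Type*} [Fintype m] [Fintype n] (X : Matrix m n ℝ) :
    (Xᵀ * X).PosSemidef := by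
  simpa using posSemidef_conjTranspose_mul_self X

end Matrix

section NuclearNorm

variable {m n : Type*} [Fintype m] [Fintype n] [DecidableEq n]

lemma nuclearNorm_eq_trace_sqrt (X : Matrix m n ℝ) :
    nuclearNorm X = (CFC.sqrt (Xᵀ * X)).trace := by
  have hX := posSemidef_transpose_mul_self X
  rw [CFC.sqrt_eq_real_sqrt _ hX.nonneg, cfcₙ_eq_cfc, hX.1.trace_cfc]
  rfl

theorem nuclearNorm_add_of_transpose_mul_eq_zero {X Z : Matrix m n ℝ} (hXZ : Xᵀ * Z = 0)
    (hXZ' : X * Zᵀ = 0) : nuclearNorm (X + Z) = nuclearNorm X + nuclearNorm Z := by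
  have hZX : Zᵀ * X = 0 := by simpa using congrArg transpose hXZ
  have hgram : (X + Z)ᵀ * (X + Z) = Xᵀ * X + Zᵀ * Z := by
    simp [Matrix.add_mul, Matrix.mul_add, hXZ, hZX]
  have hprod : (Xᵀ * X) * (Zᵀ * Z) = 0 := by
    rw [Matrix.mul_assoc, ← Matrix.mul_assoc X, hXZ', Matrix.zero_mul, Matrix.mul_zero]
  rw [nuclearNorm_eq_trace_sqrt, nuclearNorm_eq_trace_sqrt, nuclearNorm_eq_trace_sqrt, hgram,
    (posSemidef_transpose_mul_self X).sqrt_add_of_mul_eq_zero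
      (posSemidef_transpose_mul_self Z) hprod, trace_add]

end NuclearNorm

theorem stmt3_general (n₁ n₂ r : ℕ)
    (X Y : Matrix (Fin n₁) (Fin n₂) ℝ) (hrank : X.rank = r)
    (Pc : Matrix (Fin n₁) (Fin n₁) ℝ) (Pr : Matrix (Fin n₂) (Fin n₂) ℝ)
    (hPcSymm : Pcᵀ = Pc) (hPcIdem : Pc * Pc = Pc)
    (hPcRange : LinearMap.range Pc.mulVecLin = LinearMap.range X.mulVecLin)
    (hPrIdem : Pr * Pr = Pr)
    (hPrRange : LinearMap.range Pr.mulVecLin = LinearMap.range Xᵀ.mulVecLin)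
    (hfull : (Pc * Y * Pr).rank = r) :
    ∃ Y₁ Y₂ : Matrix (Fin n₁) (Fin n₂) ℝ, Y = Y₁ + Y₂ ∧ Y₁.rank = r ∧
      nuclearNorm (X + Y₂) = nuclearNorm X + nuclearNorm Y₂ := by
  have hPc_rank : Pc.rank = r := by
    rw [← hrank]
    exact congrArg (fun S : Submodule ℝ _ => Module.finrank ℝ S) hPcRange
  have hPr_rank : Pr.rank = r := by
    rw [← hrank, ← rank_transpose X]
    exact congrArg (fun S : Submodule ℝ _ => Module.finrank ℝ S) hPrRange
  obtain ⟨Y₁, Y₂, rfl, hY₁, hPcY₂, hY₂Pr⟩ :=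
    exists_add_rank_le_of_rank_mul_mul_eq hPcIdem hPrIdem Y (hfull.trans hPr_rank.symm)
  have hXPc : Xᵀ * Pc = Xᵀ := by
    simpa [hPcSymm] using congrArg transpose (mul_eq_self_of_range_le hPcIdem hPcRange.ge)
  have hPrX : Pr * Xᵀ = Xᵀ := mul_eq_self_of_range_le hPrIdem hPrRange.ge
  refine ⟨Y₁, Y₂, rfl, le_antisymm (hY₁.trans hPc_rank.le) ?_, ?_⟩
  · calc r = (Pc * Y₁ * Pr).rank := by rw [← hfull, Matrix.mul_add, hPcY₂, add_zero]
      _ ≤ Y₁.rank := (rank_mul_le_left _ _).trans (rank_mul_le_right _ _)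
  · refine nuclearNorm_add_of_transpose_mul_eq_zero ?_ ?_
    · rw [← hXPc, Matrix.mul_assoc, hPcY₂, Matrix.mul_zero]
    · have hY₂X : Y₂ * Xᵀ = 0 := by rw [← hPrX, ← Matrix.mul_assoc, hY₂Pr, Matrix.zero_mul]
      simpa using congrArg transpose hY₂X

/-- If `X` has rank `r < n₁/2`, `Pc`/`Pr` are the orthogonal projections onto the
column and row spaces of `X`, and `Pc * Y * Pr` has rank `r`, then `Y = Y₁ + Y₂`
with `rank Y₁ = r` and `‖X + Y₂‖_* = ‖X‖_* + ‖Y₂‖_*`. -/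
theorem stmt3 (n₁ n₂ r : ℕ) (hr : 2 * r < n₁)
    (X Y : Matrix (Fin n₁) (Fin n₂) ℝ) (hrank : X.rank = r)
    (Pc : Matrix (Fin n₁) (Fin n₁) ℝ) (Pr : Matrix (Fin n₂) (Fin n₂) ℝ)
    (hPcSymm : Pcᵀ = Pc) (hPcIdem : Pc * Pc = Pc)
    (hPcRange : LinearMap.range Pc.mulVecLin = LinearMap.range X.mulVecLin)
    (hPrSymm : Prᵀ = Pr) (hPrIdem : Pr * Pr = Pr)
    (hPrRange : LinearMap.range Pr.mulVecLin = LinearMap.range Xᵀ.mulVecLin)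
    (hfull : (Pc * Y * Pr).rank = r) :
    ∃ Y₁ Y₂ : Matrix (Fin n₁) (Fin n₂) ℝ, Y = Y₁ + Y₂ ∧ Y₁.rank = r ∧
      nuclearNorm (X + Y₂) = nuclearNorm X + nuclearNorm Y₂ :=
  stmt3_general n₁ n₂ r X Y hrank Pc Pr hPcSymm hPcIdem hPcRange hPrIdem hPrRange hfull
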